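/- Any partial injection extension: for a finite connected graph G and a partial injective function p from V(G) to V(G), there exists a permutation σ of V(G) expressible as a product of edge transpositions such that σ(v) = p(v) for every v in the domain of p. -/
import Mathlib

open Equiv Subgroup MulAction

/-- For a finite connected graph `G` and an injective partial function `p` on the vertices
(represented as `V → Option V`), there is a permutation `σ` of the vertices, expressible
as a product of transpositions along edges of `G`, which agrees with `p` on its domain. -/
theorem partial_injection_realized_by_edge_swaps {V : Type*} [Fintype V] [DecidableEq V]
    (G : SimpleGraph V) (hconn : G.Connected) (p : V → Option V)
    (hinj : ∀ a b c : V, p a = some c → p b = some c → a = b) :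
    ∃ l : List (V × V), (∀ q ∈ l, G.Adj q.1 q.2) ∧
      ∀ v w : V, p v = some w → ((l.map fun q => Equiv.swap q.1 q.2).prod) v = w := by
  classical
  -- the generating set of edge swaps
  set S : Set (Perm V) := {σ | ∃ a b : V, G.Adj a b ∧ σ = Equiv.swap a b} with hS_def
  have hS : ∀ σ ∈ S, σ.IsSwap := by
    rintro σ ⟨a, b, hab, rfl⟩
    exact ⟨a, b, hab.ne, rfl⟩
  -- connectivity implies every vertex is in the orbit of every other
  have horb : ∀ x y : V, x ∈ orbit (closure S) y := by
    intro x y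
    obtain ⟨w⟩ := hconn.preconnected x y
    induction w with
    | nil => exact mem_orbit_self _
    | @cons u v' w' hadj w ih =>
      obtain ⟨⟨g, hg⟩, hgy⟩ := ih
      refine ⟨⟨Equiv.swap u v' * g, ?_⟩, ?_⟩
      · exact mul_mem (subset_closure ⟨u, v', hadj, rfl⟩) hg
      · have hgy' : g w' = v' := hgy
        show (Equiv.swap u v' * g) w' = u
        rw [Perm.mul_apply, hgy', Equiv.swap_apply_right]
  have hclosure : closure S = ⊤ := by
    rw [eq_top_iff']
    intro f
    rw [mem_closure_isSwap hS]
    exact ⟨Set.toFinite _, fun x => horb _ _⟩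
  -- extend `p` to a permutation
  set D : V → Prop := fun v => (p v).isSome with hD_def
  have : DecidablePred D := fun v => by unfold D; infer_instance
  let g : {v // D v} → V := fun v => (p v.1).get v.2
  have hg_inj : Function.Injective g := by
    rintro ⟨a, ha⟩ ⟨b, hb⟩ hab
    have ha' : p a = some (g ⟨a, ha⟩) := (Option.eq_some_of_isSome ha).trans (by rfl)
    have hb' : p b = some (g ⟨b, hb⟩) := (Option.eq_some_of_isSome hb).trans (by rfl)
    exact Subtype.ext (hinj a b _ ha' (hab ▸ hb'))
  let e : {v // D v} ≃ {v // v ∈ Set.range g} :=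
    Equiv.ofInjective g hg_inj
  let σ : Perm V := e.extendSubtype
  have hσ : ∀ v w : V, p v = some w → σ v = w := by
    intro v w hvw
    have hv : D v := by simp [hD_def, hvw]
    have := e.extendSubtype_apply_of_mem v hv
    rw [this]
    show g ⟨v, hv⟩ = w
    simp [g, hvw]
  -- express σ as a product of edge swaps
  have hmem : σ ∈ Submonoid.closure (S ∪ S⁻¹) := by
    rw [← closure_toSubmonoid, mem_toSubmonoid, hclosure]
    trivial
  obtain ⟨l, hl, hlprod⟩ := Submonoid.exists_list_of_mem_closure hmem
  -- every member of l is an edge swap; extract pairs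
  have hl' : ∀ σ' ∈ l, ∃ q : V × V, G.Adj q.1 q.2 ∧ σ' = Equiv.swap q.1 q.2 := by
    intro σ' hσ'
    rcases hl σ' hσ' with h | h
    · obtain ⟨a, b, hab, rfl⟩ := h
      exact ⟨(a, b), hab, rfl⟩
    · rw [Set.mem_inv] at h
      obtain ⟨a, b, hab, hab'⟩ := h
      refine ⟨(a, b), hab, ?_⟩
      have : σ'⁻¹ = Equiv.swap a b := hab'
      rw [← inv_inv σ', this, Equiv.swap_inv]
  choose f hf1 hf2 using hl'
  refine ⟨l.attach.map fun x => f x.1 x.2, ?_, ?_⟩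
  · intro q hq
    simp only [List.mem_map, List.mem_attach, true_and] at hq
    obtain ⟨x, rfl⟩ := hq
    exact hf1 x.1 x.2
  · intro v w hvw
    have : (l.attach.map fun x => f x.1 x.2).map (fun q => Equiv.swap q.1 q.2) = l := by
      rw [List.map_map]
      conv_rhs => rw [← List.attach_map_subtype_val l]
      apply List.map_congr_left
      intro x _
      exact (hf2 x.1 x.2).symm
    rw [this, hlprod]
    exact hσ v w hvw
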